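/- Let f : {0,1}^n → {0,1} and let M be a set of pairwise disjoint I-violating pairs for f of maximum cardinality (pairwise disjoint means no point of {0,1}^n appears in two different pairs of M). Then |M|/2^n ≤ dist_int(f) ≤ 2|M|/2^n. -/

import Mathlib

/-! Lower bound: an intersecting `g` cannot be `1` at both points of a violating pair, so it
differs from `f` at a point of every pair of `M`, and these points are distinct because the pairs
are disjoint. Upper bound: switching `f` off on the at most `2|M|` points covered by `M` gives an
intersecting function, since a violating pair of it would be disjoint from every pair of `M` and
could be added to `M`, contradicting maximality. -/

/-- Normalized Hamming distance between two Boolean functions on `{0,1}^n`. -/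
noncomputable def hamDist {n : ℕ} (f g : (Fin n → Bool) → Bool) : ℝ :=
  ((Finset.univ.filter (fun x => f x ≠ g x)).card : ℝ) / 2 ^ n

/-- A Boolean function is intersecting if any two of its `1`-inputs share a coordinate
where both are `1`. -/
def IsIntersecting {n : ℕ} (g : (Fin n → Bool) → Bool) : Prop :=
  ∀ x y : Fin n → Bool, g x = true → g y = true → ∃ i, x i = true ∧ y i = true

/-- Distance from `f` to the property of being intersecting (the minimum of
`hamDist f g` over intersecting `g`). -/
noncomputable def distInt {n : ℕ} (f : (Fin n → Bool) → Bool) : ℝ :=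
  sInf (hamDist f '' {g | IsIntersecting g})

/-- `(x, y)` is an I-violating pair for `f`: `f(x) = f(y) = 1` and `x ∩ y = ∅`. -/
def IsIViolating {n : ℕ} (f : (Fin n → Bool) → Bool)
    (p : (Fin n → Bool) × (Fin n → Bool)) : Prop :=
  f p.1 = true ∧ f p.2 = true ∧ ¬ ∃ i, p.1 i = true ∧ p.2 i = true

/-- The points of a pair. -/
def pairPoints {n : ℕ} (p : (Fin n → Bool) × (Fin n → Bool)) : Set (Fin n → Bool) :=
  {p.1, p.2}

lemma Finset.card_le_card_of_forall_exists_mem {ι α : Type*} {M : Finset ι} {S : Finset α}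
    {P : ι → Set α} (hdisj : (M : Set ι).PairwiseDisjoint P) (hS : ∀ i ∈ M, ∃ x ∈ S, x ∈ P i) :
    M.card ≤ S.card := by
  refine Finset.card_le_card_of_forall_subsingleton (fun i x => x ∈ P i) hS fun x _ => ?_
  rintro i ⟨hi, hxi⟩ j ⟨hj, hxj⟩
  exact hdisj.elim_set hi hj x hxi hxj

section

variable {α : Type*} [DecidableEq α]

def pairSupport (M : Finset (α × α)) : Finset α :=
  M.biUnion fun p => {p.1, p.2}

lemma mem_pairSupport {M : Finset (α × α)} {x : α} :
    x ∈ pairSupport M ↔ ∃ p ∈ M, x = p.1 ∨ x = p.2 := by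
  simp [pairSupport]

lemma card_pairSupport_le (M : Finset (α × α)) : (pairSupport M).card ≤ 2 * M.card := by
  rw [mul_comm]
  exact Finset.card_biUnion_le_card_mul _ _ _ fun _ _ => Finset.card_le_two

def vanishOn (S : Finset α) (f : α → Bool) : α → Bool :=
  fun x => decide (x ∉ S) && f x

lemma vanishOn_eq_true {S : Finset α} {f : α → Bool} {x : α} :
    vanishOn S f x = true ↔ x ∉ S ∧ f x = true := by
  simp [vanishOn]

end

section

variable {n : ℕ}

lemma hamDist_nonneg (f g : (Fin n → Bool) → Bool) : 0 ≤ hamDist f g := by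
  unfold hamDist; positivity

lemma isIntersecting_const_false : IsIntersecting (fun _ : Fin n → Bool => false) := by
  simp [IsIntersecting]

lemma distInt_le_hamDist (f : (Fin n → Bool) → Bool) {g : (Fin n → Bool) → Bool}
    (hg : IsIntersecting g) : distInt f ≤ hamDist f g :=
  csInf_le ⟨0, by rintro _ ⟨g, -, rfl⟩; exact hamDist_nonneg f g⟩ ⟨g, hg, rfl⟩

lemma le_distInt {f : (Fin n → Bool) → Bool} {c : ℝ}
    (h : ∀ g, IsIntersecting g → c ≤ hamDist f g) : c ≤ distInt f :=
  le_csInf ⟨_, _, isIntersecting_const_false, rfl⟩ (by rintro _ ⟨g, hg, rfl⟩; exact h g hg)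

lemma IsIViolating.exists_ne_of_isIntersecting {f g : (Fin n → Bool) → Bool}
    {p : (Fin n → Bool) × (Fin n → Bool)} (hp : IsIViolating f p) (hg : IsIntersecting g) :
    ∃ x ∈ pairPoints p, f x ≠ g x := by
  obtain ⟨h1, h2, hdisj⟩ := hp
  by_cases hg1 : g p.1 = true
  · refine ⟨p.2, by simp [pairPoints], fun hfg => hdisj (hg _ _ hg1 ?_)⟩
    rwa [← hfg]
  · exact ⟨p.1, by simp [pairPoints], by rw [h1]; exact fun h => hg1 h.symm⟩

lemma card_le_card_filter_ne_of_isIntersecting {f g : (Fin n → Bool) → Bool}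
    {M : Finset ((Fin n → Bool) × (Fin n → Bool))} (hM : ∀ p ∈ M, IsIViolating f p)
    (hMdisj : (M : Set ((Fin n → Bool) × (Fin n → Bool))).PairwiseDisjoint pairPoints)
    (hg : IsIntersecting g) :
    M.card ≤ (Finset.univ.filter fun x => f x ≠ g x).card :=
  Finset.card_le_card_of_forall_exists_mem hMdisj fun p hp =>
    let ⟨x, hxp, hfg⟩ := (hM p hp).exists_ne_of_isIntersecting hg
    ⟨x, Finset.mem_filter.2 ⟨Finset.mem_univ x, hfg⟩, hxp⟩

lemma hamDist_vanishOn_le (S : Finset (Fin n → Bool)) (f : (Fin n → Bool) → Bool) :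
    hamDist f (vanishOn S f) ≤ S.card / 2 ^ n := by
  have hsub : (Finset.univ.filter fun x => f x ≠ vanishOn S f x) ⊆ S := by
    intro x hx
    by_contra hxS
    simp [vanishOn, hxS] at hx
  unfold hamDist
  gcongr

lemma isIntersecting_vanishOn_pairSupport {f : (Fin n → Bool) → Bool}
    {M : Finset ((Fin n → Bool) × (Fin n → Bool))} (hM : ∀ p ∈ M, IsIViolating f p)
    (hMdisj : (M : Set ((Fin n → Bool) × (Fin n → Bool))).PairwiseDisjoint pairPoints)
    (hmax : ∀ M' : Finset ((Fin n → Bool) × (Fin n → Bool)),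
      (∀ p ∈ M', IsIViolating f p) →
      (M' : Set ((Fin n → Bool) × (Fin n → Bool))).PairwiseDisjoint pairPoints →
      M'.card ≤ M.card) :
    IsIntersecting (vanishOn (pairSupport M) f) := by
  intro x y hx hy
  by_contra hxy
  rw [vanishOn_eq_true, mem_pairSupport] at hx hy
  have hfresh : ∀ q ∈ M, Disjoint (pairPoints (x, y)) (pairPoints q) := by
    intro q hq
    simp only [pairPoints, Set.disjoint_insert_left, Set.disjoint_singleton_left,
      Set.mem_insert_iff, Set.mem_singleton_iff]
    exact ⟨fun h => hx.1 ⟨q, hq, h⟩, fun h => hy.1 ⟨q, hq, h⟩⟩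
  have hnotMem : (x, y) ∉ M := fun h => hx.1 ⟨(x, y), h, Or.inl rfl⟩
  have hlarger := hmax (insert (x, y) M)
    (Finset.forall_mem_insert _ _ _ |>.2 ⟨⟨hx.2, hy.2, hxy⟩, hM⟩)
    (by rw [Finset.coe_insert]; exact hMdisj.insert fun q hq _ => hfresh q hq)
  rw [Finset.card_insert_of_notMem hnotMem] at hlarger
  omega

end

/-- If `M` is a maximum-cardinality set of pairwise disjoint I-violating
pairs for `f`, then `|M|/2^n ≤ dist_int(f) ≤ 2|M|/2^n`. -/
theorem dist_int_vs_max_disjoint_violating_pairs (n : ℕ) (f : (Fin n → Bool) → Bool)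
    (M : Finset ((Fin n → Bool) × (Fin n → Bool)))
    (hM : ∀ p ∈ M, IsIViolating f p)
    (hMdisj : ∀ p ∈ M, ∀ q ∈ M, p ≠ q → Disjoint (pairPoints p) (pairPoints q))
    (hmax : ∀ M' : Finset ((Fin n → Bool) × (Fin n → Bool)),
      (∀ p ∈ M', IsIViolating f p) →
      (∀ p ∈ M', ∀ q ∈ M', p ≠ q → Disjoint (pairPoints p) (pairPoints q)) →
      M'.card ≤ M.card) :
    (M.card : ℝ) / 2 ^ n ≤ distInt f ∧ distInt f ≤ 2 * (M.card : ℝ) / 2 ^ n := by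
  refine ⟨le_distInt fun g hg => ?_, ?_⟩
  · unfold hamDist
    gcongr
    exact card_le_card_filter_ne_of_isIntersecting hM hMdisj hg
  · calc distInt f ≤ hamDist f (vanishOn (pairSupport M) f) :=
          distInt_le_hamDist f (isIntersecting_vanishOn_pairSupport hM hMdisj hmax)
      _ ≤ (pairSupport M).card / 2 ^ n := hamDist_vanishOn_le _ f
      _ ≤ 2 * M.card / 2 ^ n := by
          gcongr
          exact_mod_cast card_pairSupport_le M
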